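/- arXiv:0909.1390 — 4 statements merged into one kernel-verified Lean document; each statement's English description precedes it below -/
import Mathlib

section
/- Let N be a compact zero-dimensional Hausdorff topological group and let G be a dense subgroup of the product group N × ℝ such that every closed subgroup of G is locally pseudocompact. Then {e} × ℝ ⊆ G, where e is the identity of N. -/
/-- A topological space is *pseudocompact* if every continuous real-valued function
on it is bounded. -/
def Pseudocompact (X : Type*) [TopologicalSpace X] : Prop :=
  ∀ f : X → ℝ, Continuous f → ∃ M : ℝ, ∀ x : X, |f x| ≤ M

/-- A topological additive group is *locally pseudocompact* if some neighborhood of the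
identity has pseudocompact closure. -/
def AddLocallyPseudocompact (G : Type*) [AddGroup G] [TopologicalSpace G] : Prop :=
  ∃ U ∈ nhds (0 : G), Pseudocompact (closure U)

/-!
If `w` lies in the closure of a pseudocompact set `C` and is the only zero on `C ∪ {w}` of some
continuous `g`, then `w ∈ C`: otherwise `1 / g` would be unbounded on `C`.

Since `G` is locally pseudocompact, `snd '' G` contains a neighbourhood of `0`, hence is all of
`ℝ`; pick `(x₁, √2), (x₂, 1) ∈ G`. The closed subgroup `A` topologically generated by `x₁, x₂`
meets the open subgroups of `N` in only countably many ways (Schreier's lemma), which makes every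
point of `A × ℝ` a zero set there. The closure `L` of `G ∩ (A × ℝ)` projects densely, hence
(`N` being compact) onto `ℝ`, and divisibility modulo open subgroups forces `{0} × ℝ ⊆ L`.
Finally, if `h ∈ G ∩ (A × ℝ)` is close to `(0, r)`, the small point `-h + (0, r)` of `A × ℝ` lies
in the closure of a pseudocompact neighbourhood of `0` in `G ∩ (A × ℝ)`, hence in `G`.
-/

open Set Filter Topology

section Pseudocompact

variable {X Y : Type*} [TopologicalSpace X] [TopologicalSpace Y]

theorem Pseudocompact.image {s : Set X} (hs : Pseudocompact s) {f : X → Y} (hf : Continuous f) :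
    Pseudocompact (f '' s) := fun g hg ↦ by
  obtain ⟨M, hM⟩ := hs (g ∘ s.imageFactorization f)
    (hg.comp ((hf.comp continuous_subtype_val).subtype_mk _))
  exact ⟨M, imageFactorization_surjective.forall.mpr hM⟩

/-- If `p` were a limit point of `range f` outside it, `x ↦ (f x - p)⁻¹` would be unbounded. -/
theorem Pseudocompact.isClosed_range (hX : Pseudocompact X) {f : X → ℝ} (hf : Continuous f) :
    IsClosed (range f) := by
  refine isClosed_of_closure_subset fun p hp ↦ ?_
  by_contra hpf
  have hne : ∀ x, f x - p ≠ 0 := fun x h ↦ hpf ⟨x, sub_eq_zero.mp h⟩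
  obtain ⟨M, hM⟩ := hX (fun x ↦ (f x - p)⁻¹) ((hf.sub continuous_const).inv₀ hne)
  obtain ⟨_, ⟨x, rfl⟩, hx⟩ := Metric.mem_closure_iff.mp hp (|M| + 1)⁻¹ (by positivity)
  rw [dist_comm, Real.dist_eq, lt_inv_comm₀ (abs_pos.mpr (hne x)) (by positivity)] at hx
  have := hM x
  rw [abs_inv] at this
  linarith [le_abs_self M]

theorem Pseudocompact.mem_of_mem_closure {C : Set Y} (hC : Pseudocompact C) {g : Y → ℝ}
    (hg : Continuous g) {w : Y} (hw : w ∈ closure C) (hgw : g w = 0)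
    (hzero : ∀ x ∈ C, g x = 0 → x = w) : w ∈ C := by
  have h0 : (0 : ℝ) ∈ closure (range (g ∘ ((↑) : C → Y))) := by
    rw [range_comp, Subtype.range_coe, ← hgw]
    exact mem_closure_image hg.continuousAt hw
  obtain ⟨x, hx⟩ := (hC.isClosed_range (hg.comp continuous_subtype_val)).closure_subset h0
  exact hzero x x.2 hx ▸ x.2

end Pseudocompact

theorem exists_continuous_preimage_zero_eq_iInter {X : Type*} [TopologicalSpace X]
    {s : ℕ → Set X} (hs : ∀ n, IsClopen (s n)) :
    ∃ φ : X → ℝ, Continuous φ ∧ φ ⁻¹' {0} = ⋂ n, s n := by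
  set f : ℕ → X → ℝ := fun n ↦ (s n)ᶜ.indicator fun _ ↦ (1 / 2 : ℝ) ^ n
  have hf : ∀ n x, ‖f n x‖ ≤ (1 / 2 : ℝ) ^ n := fun n x ↦
    (norm_indicator_le_norm_self _ x).trans (by simp)
  refine ⟨fun x ↦ ∑' n, f n x,
    continuous_tsum (fun n ↦ (hs n).compl.continuous_indicator continuous_const)
      summable_geometric_two hf, ?_⟩
  ext x
  have hsum : Summable fun n ↦ f n x := summable_geometric_two.of_norm_bounded (hf · x)
  have hnonneg : ∀ n, 0 ≤ f n x := fun n ↦ indicator_nonneg (fun _ _ ↦ by positivity) x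
  rw [mem_preimage, mem_singleton_iff, ← hsum.hasSum_iff, hasSum_zero_iff_of_nonneg hnonneg,
    mem_iInter]
  simp [funext_iff, f]

theorem IsClopen.inter_closure_eq {X : Type*} [TopologicalSpace X] {U : Set X} (hU : IsClopen U)
    (s : Set X) : U ∩ closure s = closure (U ∩ s) :=
  hU.isOpen.inter_closure.antisymm
    ((closure_inter_subset_inter_closure U s).trans_eq (by rw [hU.isClosed.closure_eq]))

theorem AddSubgroup.countable_setOf_fg {Γ : Type*} [AddGroup Γ] [Countable Γ] :
    {H : AddSubgroup Γ | H.FG}.Countable := by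
  refine (countable_range fun s : Finset Γ ↦ AddSubgroup.closure (s : Set Γ)).mono ?_
  rintro _ ⟨s, rfl⟩
  exact mem_range_self s

theorem AddLocallyPseudocompact.exists_pseudocompact {Y X : Type*} [AddGroup Y]
    [TopologicalSpace Y] [TopologicalSpace X] (hY : AddLocallyPseudocompact Y) {ι : Y → X}
    (hι : IsInducing ι) :
    ∃ V ∈ 𝓝 (ι 0), ∃ C ⊆ range ι, V ∩ range ι ⊆ C ∧ Pseudocompact C := by
  obtain ⟨U, hU, hUc⟩ := hY
  rw [hι.nhds_eq_comap] at hU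
  obtain ⟨V, hV, hVU⟩ := hU
  refine ⟨V, hV, ι '' closure U, image_subset_range _ _, ?_, hUc.image hι.continuous⟩
  rintro _ ⟨hxV, x, rfl⟩
  exact mem_image_of_mem ι (subset_closure (hVU hxV))

theorem exists_pseudocompact_inter_nhds {X : Type*} [AddGroup X] [TopologicalSpace X]
    {G : AddSubgroup X}
    (hG : ∀ H : AddSubgroup G, IsClosed (H : Set G) → AddLocallyPseudocompact H)
    {F : AddSubgroup X} (hF : IsClosed (F : Set X)) :
    ∃ V ∈ 𝓝 (0 : X), ∃ C ⊆ ((G ⊓ F : AddSubgroup X) : Set X),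
      ((G ⊓ F : AddSubgroup X) : Set X) ∩ V ⊆ C ∧ Pseudocompact C := by
  set ι : F.addSubgroupOf G → X := fun h ↦ h.1.1
  have hrange : range ι = (G ⊓ F : AddSubgroup X) := by
    ext x
    simp [ι, AddSubgroup.mem_addSubgroupOf, and_comm]
  have hclosed : IsClosed ((F.addSubgroupOf G : AddSubgroup G) : Set G) := by
    rw [AddSubgroup.coe_addSubgroupOf]
    exact hF.preimage continuous_subtype_val
  obtain ⟨V, hV, C, hC⟩ := (hG _ hclosed).exists_pseudocompact (ι := ι)
    (IsInducing.subtypeVal.comp IsInducing.subtypeVal)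
  rw [hrange, inter_comm] at hC
  exact ⟨V, hV, C, hC⟩

section TopologicalGroup

variable {N : Type*} [AddGroup N] [TopologicalSpace N] [IsTopologicalAddGroup N]
  {Γ : Type*} [AddGroup Γ]

theorem OpenAddSubgroup.inter_closure_range_eq (O : OpenAddSubgroup N) (φ : Γ →+ N) :
    (O : Set N) ∩ closure (range φ) = closure (φ '' ((O : AddSubgroup N).comap φ)) := by
  rw [O.isClopen.inter_closure_eq, AddSubgroup.coe_comap, image_preimage_eq_inter_range]
  rfl

variable [CompactSpace N]

theorem OpenAddSubgroup.exists_pos_forall_nsmul_mem (O : OpenAddSubgroup N) :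
    ∃ m : ℕ, 0 < m ∧ ∀ x : N, m • x ∈ O := by
  have : Finite (N ⧸ (O : AddSubgroup N)) := AddSubgroup.quotient_finite_of_isOpen _ O.isOpen
  exact ⟨_, Nat.factorial_pos _, fun x ↦ AddSubgroup.nsmul_mem_of_index_ne_zero_of_dvd
    AddSubgroup.index_ne_zero_of_finite x fun _ ↦ Nat.dvd_factorial⟩

theorem eq_zero_of_forall_mem_openAddSubgroup [T1Space N]
    (hzd : TopologicalSpace.IsTopologicalBasis {s : Set N | IsClopen s}) {z : N}
    (hz : ∀ O : OpenAddSubgroup N, z ∈ O) : z = 0 := by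
  by_contra hz0
  obtain ⟨W, hW, h0W, hWz⟩ := hzd.exists_subset_of_mem_open
    (show (0 : N) ∈ ({z}ᶜ : Set N) from Ne.symm hz0) isOpen_compl_singleton
  obtain ⟨O, hO⟩ := IsTopologicalAddGroup.exist_openAddSubgroup_sub_clopen_nhds_of_zero hW h0W
  exact hWz (hO (hz O)) rfl

/-- Schreier's lemma: the preimages of open subgroups have finite index in `Γ`, hence are
finitely generated. -/
theorem countable_range_comap_openAddSubgroup [AddGroup.FG Γ] [Countable Γ] (φ : Γ →+ N) :
    (range fun O : OpenAddSubgroup N ↦ (O : AddSubgroup N).comap φ).Countable := by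
  refine AddSubgroup.countable_setOf_fg.mono ?_
  rintro _ ⟨O, rfl⟩
  have : Finite (N ⧸ (O : AddSubgroup N)) := AddSubgroup.quotient_finite_of_isOpen _ O.isOpen
  have : (O : AddSubgroup N).FiniteIndex := AddSubgroup.finiteIndex_of_finite_quotient
  have : ((O : AddSubgroup N).comap φ).FiniteIndex :=
    ⟨by rw [AddSubgroup.index_comap]; exact AddSubgroup.FiniteIndex.index_ne_zero⟩
  exact (AddGroup.fg_iff_addSubgroup_fg _).mp (AddSubgroup.fg_of_index_ne_zero _)

/-- By `OpenAddSubgroup.inter_closure_range_eq`, the trace of an open subgroup on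
`closure (range φ)` is determined by its preimage under `φ`, so countably many open subgroups
realise all these traces. -/
theorem exists_seq_openAddSubgroup_eq_zero [T1Space N]
    (hzd : TopologicalSpace.IsTopologicalBasis {s : Set N | IsClopen s})
    [AddGroup.FG Γ] [Countable Γ] (φ : Γ →+ N) :
    ∃ O : ℕ → OpenAddSubgroup N, ∀ z ∈ closure (range φ), (∀ n, z ∈ O n) → z = 0 := by
  obtain ⟨e, he⟩ := (countable_range_comap_openAddSubgroup φ).exists_eq_range (range_nonempty _)
  choose O hO using fun n ↦ show e n ∈ range _ from he ▸ mem_range_self n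
  beta_reduce at hO
  refine ⟨O, fun z hz hzO ↦ eq_zero_of_forall_mem_openAddSubgroup hzd fun O' ↦ ?_⟩
  obtain ⟨n, hn⟩ : (O' : AddSubgroup N).comap φ ∈ range e := he ▸ mem_range_self O'
  have := (O n).inter_closure_range_eq φ
  rw [hO n, hn, ← O'.inter_closure_range_eq] at this
  exact (this.subset ⟨hzO n, hz⟩).1

/-- Each fibre `{x | (x, t) ∈ L}` meets every open subgroup `O` (divide `t` by an exponent of
the finite set `N ⧸ O`); by compactness some point of the fibre lies in all of them. -/
theorem zero_prod_mem_of_isClosed_of_dense_snd [T1Space N]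
    (hzd : TopologicalSpace.IsTopologicalBasis {s : Set N | IsClopen s})
    {L : AddSubgroup (N × ℝ)} (hL : IsClosed (L : Set (N × ℝ)))
    (hdense : Dense (Prod.snd '' (L : Set (N × ℝ)))) (t : ℝ) : ((0 : N), t) ∈ L := by
  have hsnd : Prod.snd '' (L : Set (N × ℝ)) = univ := by
    rw [← (isClosedMap_snd_of_compactSpace _ hL).closure_eq, hdense.closure_eq]
  set Z : OpenAddSubgroup N → Set N := fun O ↦ (O : Set N) ∩ {x | (x, t) ∈ L}
  have hZclosed : ∀ O, IsClosed (Z O) := fun O ↦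
    O.isClosed.inter (hL.preimage (Continuous.prodMk_left t))
  have hZne : ∀ O, (Z O).Nonempty := by
    intro O
    obtain ⟨m, hm, hmO⟩ := O.exists_pos_forall_nsmul_mem
    obtain ⟨⟨x, _⟩, hx, rfl⟩ : t / m ∈ Prod.snd '' (L : Set (N × ℝ)) := hsnd ▸ mem_univ _
    refine ⟨m • x, hmO x, ?_⟩
    have := L.nsmul_mem hx m
    rwa [Prod.smul_mk, nsmul_eq_mul, mul_div_cancel₀ _ (by positivity)] at this
  have hZdir : Directed (· ⊇ ·) Z := fun O₁ O₂ ↦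
    ⟨O₁ ⊓ O₂, fun _ hx ↦ ⟨hx.1.1, hx.2⟩, fun _ hx ↦ ⟨hx.1.2, hx.2⟩⟩
  obtain ⟨z, hz⟩ := IsCompact.nonempty_iInter_of_directed_nonempty_isCompact_isClosed Z hZdir
    hZne (fun O ↦ (hZclosed O).isCompact) hZclosed
  rw [mem_iInter] at hz
  obtain rfl := eq_zero_of_forall_mem_openAddSubgroup hzd fun O ↦ (hz O).1
  exact (hz ⊤).2

end TopologicalGroup

theorem dense_snd_image_of_irrational {N : Type*} [AddGroup N] {L : AddSubgroup (N × ℝ)}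
    {x y : N} {a b : ℝ} (hx : (x, a) ∈ L) (hy : (y, b) ∈ L) (hab : Irrational (a / b)) :
    Dense (Prod.snd '' (L : Set (N × ℝ))) := by
  refine (dense_addSubgroupClosure_pair_iff.mpr hab).mono ?_
  rw [← AddMonoidHom.coe_snd, ← AddSubgroup.coe_map, SetLike.coe_subset_coe,
    AddSubgroup.closure_le]
  exact pair_subset ⟨_, hx, rfl⟩ ⟨_, hy, rfl⟩

section Product

variable {N : Type*} [AddGroup N] [TopologicalSpace N]

/-- `(x, s) ↦ |φ (-w.1 + x)| + |s - w.2|`, with `φ` vanishing exactly on `⋂ n, O n`, vanishes on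
`A × ℝ` only at `w`. -/
theorem Pseudocompact.mem_of_mem_closure_prod [IsTopologicalAddGroup N] {A : AddSubgroup N}
    {O : ℕ → OpenAddSubgroup N} (hO : ∀ z ∈ A, (∀ n, z ∈ O n) → z = 0) {C : Set (N × ℝ)}
    (hC : Pseudocompact C) (hCA : ∀ x ∈ C, x.1 ∈ A) {w : N × ℝ} (hwA : w.1 ∈ A)
    (hw : w ∈ closure C) : w ∈ C := by
  obtain ⟨φ, hφ, hφ0⟩ := exists_continuous_preimage_zero_eq_iInter fun n ↦ (O n).isClopen
  have hφ0' : ∀ z, φ z = 0 ↔ ∀ n, z ∈ O n := fun z ↦ by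
    rw [← mem_singleton_iff, ← mem_preimage, hφ0, mem_iInter]
    rfl
  refine hC.mem_of_mem_closure (g := fun x ↦ |φ (-w.1 + x.1)| + |x.2 - w.2|) (by fun_prop) hw
    ?_ fun x hx hgx ↦ ?_
  · simp [(hφ0' 0).mpr fun n ↦ (O n).zero_mem]
  · rw [add_eq_zero_iff_of_nonneg (abs_nonneg _) (abs_nonneg _), abs_eq_zero, abs_eq_zero,
      sub_eq_zero, hφ0'] at hgx
    have := hO _ (A.add_mem (A.neg_mem hwA) (hCA x hx)) hgx.1
    exact Prod.ext (neg_add_eq_zero.mp this).symm hgx.2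

/-- `snd '' C` is closed and contains `snd '' interior V`, so the subgroup `snd '' G` of `ℝ` is
open. -/
theorem exists_prod_mem_of_dense {G : AddSubgroup (N × ℝ)}
    (hG : ∀ H : AddSubgroup G, IsClosed (H : Set G) → AddLocallyPseudocompact H)
    (hdense : Dense (G : Set (N × ℝ))) (t : ℝ) : ∃ x : N, (x, t) ∈ G := by
  obtain ⟨V, hV, C, hCG, hGC, hC⟩ :=
    exists_pseudocompact_inter_nhds hG (F := ⊤) (by simp [isClosed_univ])
  simp only [inf_top_eq] at hCG hGC
  have hclosed : IsClosed (Prod.snd '' C) := by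
    simpa [range_comp] using hC.isClosed_range (continuous_snd.comp continuous_subtype_val)
  have hsub : Prod.snd '' interior V ⊆ Prod.snd '' C := calc
    _ ⊆ Prod.snd '' closure (interior V ∩ G) :=
        image_mono (hdense.open_subset_closure_inter isOpen_interior)
    _ ⊆ closure (Prod.snd '' (interior V ∩ G)) := image_closure_subset_closure_image continuous_snd
    _ ⊆ closure (Prod.snd '' C) :=
        closure_mono (image_mono fun x hx ↦ hGC ⟨hx.2, interior_subset hx.1⟩)
    _ = _ := hclosed.closure_eq
  set S := G.map (AddMonoidHom.snd N ℝ)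
  have hS : IsOpen (S : Set ℝ) := S.isOpen_of_mem_nhds (g := 0) <|
    mem_of_superset (isOpenMap_snd.image_mem_nhds (interior_mem_nhds.mpr hV))
      (hsub.trans (image_mono hCG))
  obtain ⟨⟨x, _⟩, hx, rfl⟩ : t ∈ S := by
    rw [← SetLike.mem_coe, IsClopen.eq_univ ⟨S.isClosed_of_isOpen hS, hS⟩ ⟨0, S.zero_mem⟩]
    trivial
  exact ⟨x, hx⟩

/-- For `h ∈ G ∩ (A × ℝ)` close to `(0, r)`, the point `-h + (0, r)` lies in the closure of the
pseudocompact set `C` given by `exists_pseudocompact_inter_nhds`, hence in `C ⊆ G`. -/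
theorem zero_prod_mem_of_mem_closure_inf_prod [IsTopologicalAddGroup N] {G : AddSubgroup (N × ℝ)}
    (hG : ∀ H : AddSubgroup G, IsClosed (H : Set G) → AddLocallyPseudocompact H)
    {A : AddSubgroup N} (hA : IsClosed (A : Set N))
    {O : ℕ → OpenAddSubgroup N} (hO : ∀ z ∈ A, (∀ n, z ∈ O n) → z = 0) {r : ℝ}
    (hr : ((0 : N), r) ∈ closure ((G ⊓ A.prod ⊤ : AddSubgroup (N × ℝ)) : Set (N × ℝ))) :
    ((0 : N), r) ∈ G := by
  set H := G ⊓ A.prod ⊤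
  obtain ⟨V, hV, C, hCH, hHC, hC⟩ := exists_pseudocompact_inter_nhds hG (F := A.prod ⊤)
    (by rw [AddSubgroup.coe_prod, AddSubgroup.coe_top]; exact hA.prod isClosed_univ)
  have hcont : Continuous fun h : N × ℝ ↦ -h + ((0 : N), r) := by fun_prop
  have hnhds : (fun h ↦ -h + ((0 : N), r)) ⁻¹' interior V ∈ 𝓝 ((0 : N), r) :=
    hcont.continuousAt.preimage_mem_nhds
      (by simpa only [neg_add_cancel] using interior_mem_nhds.mpr hV)
  obtain ⟨h, hwV, hH⟩ := mem_closure_iff_nhds.mp hr _ hnhds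
  set w := -h + ((0 : N), r)
  have hwH : w ∈ closure (H : Set (N × ℝ)) := by
    rw [← AddSubgroup.topologicalClosure_coe] at hr ⊢
    exact H.topologicalClosure.add_mem
      (H.topologicalClosure.neg_mem (H.le_topologicalClosure hH)) hr
  have hwC : w ∈ C := by
    refine hC.mem_of_mem_closure_prod hO (fun x hx ↦ (AddSubgroup.mem_prod.mp (hCH hx).2).1)
      ?_ (closure_mono (fun x hx ↦ hHC ⟨hx.2, interior_subset hx.1⟩)
        (isOpen_interior.inter_closure ⟨hwV, hwH⟩))
    simpa [w] using A.neg_mem (AddSubgroup.mem_prod.mp hH.2).1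
  simpa [w] using G.add_mem hH.1 (hCH hwC).1

end Product

/-- let `N` be a compact zero-dimensional Hausdorff topological group and
`G` a dense subgroup of `N × ℝ` all of whose closed subgroups are locally
pseudocompact.  Then `{0} × ℝ ⊆ G`. -/
theorem line_subset_of_dense_hereditarilyLocallyPseudocompact {N : Type*} [AddGroup N]
    [TopologicalSpace N] [IsTopologicalAddGroup N] [CompactSpace N] [T2Space N]
    (hzd : TopologicalSpace.IsTopologicalBasis {s : Set N | IsClopen s})
    (G : AddSubgroup (N × ℝ)) (hdense : Dense (G : Set (N × ℝ)))
    (hG : ∀ H : AddSubgroup G, IsClosed (H : Set G) → AddLocallyPseudocompact H) :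
    ∀ r : ℝ, ((0 : N), r) ∈ G := by
  obtain ⟨x₁, hx₁⟩ := exists_prod_mem_of_dense hG hdense √2
  obtain ⟨x₂, hx₂⟩ := exists_prod_mem_of_dense hG hdense 1
  let φ : FreeAddGroup (Fin 2) →+ N := FreeAddGroup.lift ![x₁, x₂]
  let A := φ.range.topologicalClosure
  obtain ⟨O, hO⟩ := exists_seq_openAddSubgroup_eq_zero hzd φ
  have hA : (A : Set N) = closure (range φ) := by
    rw [AddSubgroup.topologicalClosure_coe, AddMonoidHom.coe_range]
  have hgen : ∀ i, ![x₁, x₂] i ∈ A := fun i ↦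
    φ.range.le_topologicalClosure (φ.mem_range.mpr ⟨.of i, by simp [φ]⟩)
  have hmem : ∀ {p : N × ℝ}, p ∈ G → p.1 ∈ A → p ∈ (G ⊓ A.prod ⊤).topologicalClosure :=
    fun hpG hpA ↦ AddSubgroup.le_topologicalClosure _ ⟨hpG, hpA, trivial⟩
  intro r
  refine zero_prod_mem_of_mem_closure_inf_prod hG φ.range.isClosed_topologicalClosure
    (fun z hz ↦ hO z (hA ▸ hz)) ?_
  rw [← AddSubgroup.topologicalClosure_coe]
  exact zero_prod_mem_of_isClosed_of_dense_snd hzd (AddSubgroup.isClosed_topologicalClosure _)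
    (dense_snd_image_of_irrational (hmem hx₁ (hgen 0)) (hmem hx₂ (hgen 1))
      (by simpa using irrational_sqrt_two)) r
end

section
/- Let G be a locally pseudocompact Hausdorff topological group. If every countable subgroup of G is locally pseudocompact, then G is discrete. -/
/-- A topological group is *locally pseudocompact* if some neighborhood of the identity
has pseudocompact closure. -/
def LocallyPseudocompact (G : Type*) [Group G] [TopologicalSpace G] : Prop :=
  ∃ U ∈ nhds (1 : G), Pseudocompact (closure U)

open Set Filter Topology Function
open scoped Pointwise

section CompletelyRegular

variable {X : Type*} [TopologicalSpace X] [CompletelyRegularSpace X]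

theorem exists_continuous_nonneg_eq_one_support_subset {U : Set X} (hU : IsOpen U) {x : X}
    (hx : x ∈ U) : ∃ f : X → ℝ, Continuous f ∧ 0 ≤ f ∧ f x = 1 ∧ support f ⊆ U := by
  obtain ⟨f, hf, hfx, hfU⟩ := CompletelyRegularSpace.completely_regular_isOpen x U hU hx
  refine ⟨fun y => unitInterval.symm (f y), by fun_prop, fun y => (unitInterval.symm (f y)).2.1,
    by simp [hfx], fun y hy => by_contra fun hyU => hy ?_⟩
  simp [hfU hyU]

theorem LocallyFinite.exists_continuous_natCast_le {D : ℕ → Set X} (hD : LocallyFinite D)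
    (hDo : ∀ n, IsOpen (D n)) {x : ℕ → X} (hx : ∀ n, x n ∈ D n) :
    ∃ F : X → ℝ, Continuous F ∧ ∀ n : ℕ, (n : ℝ) ≤ F (x n) := by
  choose f hfc hf0 hfx hfD using fun n =>
    exists_continuous_nonneg_eq_one_support_subset (hDo n) (hx n)
  have hsupp : ∀ n : ℕ, support (fun y => n * f n y) ⊆ D n :=
    fun n => (support_mul_subset_right _ _).trans (hfD n)
  refine ⟨fun y => ∑ᶠ n : ℕ, n * f n y,
    continuous_finsum (fun n => continuous_const.mul (hfc n)) (hD.subset hsupp), fun n => ?_⟩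
  calc (n : ℝ) = n * f n (x n) := by rw [hfx, mul_one]
    _ ≤ ∑ᶠ m : ℕ, m * f m (x n) :=
      single_le_finsum n ((hD.point_finite (x n)).subset fun m hm => hsupp m hm)
        fun m => mul_nonneg m.cast_nonneg (hf0 m _)

theorem Pseudocompact.finite_of_locallyFinite {ι : Type*} {K : Set X} (hK : Pseudocompact K)
    {D : ι → Set X} (hD : LocallyFinite D) (hDo : ∀ i, IsOpen (D i))
    (hDK : ∀ i, (D i ∩ K).Nonempty) : Finite ι := by
  by_contra hfin
  have e := (not_finite_iff_infinite.1 hfin).natEmbedding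
  choose x hxD hxK using fun n => hDK (e n)
  obtain ⟨F, hF, hFx⟩ :=
    (hD.comp_injective e.injective).exists_continuous_natCast_le (fun n => hDo (e n)) hxD
  obtain ⟨M, hM⟩ := hK (fun y => F y) (hF.comp continuous_subtype_val)
  obtain ⟨n, hn⟩ := exists_nat_gt M
  linarith [hFx n, hM ⟨x n, hxK n⟩, le_abs_self (F (x n))]

end CompletelyRegular

section Countable

variable {X : Type*} [TopologicalSpace X] [T1Space X] [RegularSpace X] [PerfectSpace X]

theorem exists_isOpen_closure_subset_diff {V : Set X} (hV : IsOpen V) (hne : V.Nonempty) (a : X) :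
    ∃ V' : Set X, IsOpen V' ∧ V'.Nonempty ∧ closure V' ⊆ V \ {a} ∧ (V \ closure V').Nonempty := by
  obtain ⟨x, hx⟩ := hne
  have hinf : V.Infinite := infinite_of_mem_nhds x (hV.mem_nhds hx)
  obtain ⟨p, hpV, hpa⟩ := (hinf.sdiff (toFinite {a})).nonempty
  obtain ⟨q, hqV, hqap⟩ := (hinf.sdiff (toFinite {a, p})).nonempty
  have hO : V \ {a, p} ∈ 𝓝 q := (hV.sdiff (toFinite _).isClosed).mem_nhds ⟨hqV, hqap⟩
  obtain ⟨V', hV'o, hqV', hV'⟩ :=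
    TopologicalSpace.isTopologicalBasis_opens.exists_closure_subset hO
  refine ⟨V', hV'o, ⟨q, hqV'⟩, fun z hz => ?_, p, hpV, fun hp => (hV' hp).2 (by simp)⟩
  exact ⟨(hV' hz).1, fun hza => (hV' hz).2 (by simp [show z = a from hza])⟩

theorem exists_locallyFinite_isOpen_subsets_of_countable [Countable X] {U : Set X}
    (hU : IsOpen U) (hne : U.Nonempty) :
    ∃ D : ℕ → Set X, LocallyFinite D ∧ ∀ n, IsOpen (D n) ∧ (D n).Nonempty ∧ D n ⊆ U := by
  have := hne.to_type
  obtain ⟨e, he⟩ := exists_surjective_nat X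
  choose! next hnext using fun (n : ℕ) (V : Set X) (hV : IsOpen V ∧ V.Nonempty) =>
    exists_isOpen_closure_subset_diff hV.1 hV.2 (e n)
  let V : ℕ → Set X := fun n => Nat.rec U (fun k W => next k W) n
  have hV : ∀ n, IsOpen (V n) ∧ (V n).Nonempty :=
    fun n => Nat.rec ⟨hU, hne⟩ (fun k ih => ⟨(hnext k _ ih).1, (hnext k _ ih).2.1⟩) n
  have hstep : ∀ n, closure (V (n + 1)) ⊆ V n \ {e n} ∧ (V n \ closure (V (n + 1))).Nonempty :=
    fun n => (hnext n _ (hV n)).2.2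
  have hanti : Antitone V :=
    antitone_nat_of_succ_le fun n => subset_closure.trans ((hstep n).1.trans sdiff_subset)
  refine ⟨fun n => V n \ closure (V (n + 1)), fun y => ?_,
    fun n => ⟨(hV n).1.sdiff isClosed_closure, (hstep n).2, sdiff_subset.trans (hanti n.zero_le)⟩⟩
  obtain ⟨m, rfl⟩ := he y
  refine ⟨(closure (V (m + 1)))ᶜ,
    isClosed_closure.isOpen_compl.mem_nhds fun h => ((hstep m).1 h).2 rfl,
    (finite_Iio (m + 1)).subset ?_⟩
  rintro n ⟨z, ⟨hz, -⟩, hzm⟩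
  by_contra hge
  exact hzm (subset_closure (hanti (not_lt.1 hge) hz))

end Countable

section TopologicalGroup

variable {G : Type*} [Group G]

theorem Subgroup.countable_closure {s : Set G} (hs : s.Countable) :
    ((closure s : Subgroup G) : Set G).Countable := by
  have := hs.to_subtype
  rw [FreeGroup.closure_eq_range]
  exact countable_range _

variable [TopologicalSpace G]

theorem Subgroup.eventually_eq_one_of_discreteTopology {H : Subgroup G} [DiscreteTopology H] :
    ∀ᶠ g in 𝓝 (1 : G), g ∈ H → g = 1 := by
  have := (discreteTopology_subtype_iff.1 ‹_›) 1 H.one_mem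
  rw [inf_principal_eq_bot, mem_nhdsWithin_iff_eventually] at this
  filter_upwards [this] with g hg hgH
  by_contra hg1
  exact hg hg1 hgH

variable [IsTopologicalGroup G]

instance IsTopologicalGroup.toCompletelyRegularSpace : CompletelyRegularSpace G :=
  .of_exists_uniformSpace ⟨IsTopologicalGroup.rightUniformSpace G, rfl⟩

theorem IsTopologicalGroup.perfectSpace_of_not_discreteTopology (h : ¬DiscreteTopology G) :
    PerfectSpace G := by
  refine perfectSpace_iff_forall_not_isolated.2 fun x => ⟨fun hx => h ?_⟩
  have hxopen : IsOpen ({x} : Set G) := by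
    rw [isOpen_singleton_iff_nhds_eq_pure, ← nhdsNE_sup_pure, hx, bot_sup_eq]
  rw [discreteTopology_iff_isOpen_singleton_one]
  simpa using hxopen.preimage (continuous_const_mul x)

theorem discreteTopology_of_countable_of_locallyPseudocompact [T1Space G] [Countable G]
    (hG : LocallyPseudocompact G) : DiscreteTopology G := by
  by_contra hnd
  have := IsTopologicalGroup.perfectSpace_of_not_discreteTopology hnd
  obtain ⟨U, hU, hK⟩ := hG
  have h1 : (1 : G) ∈ interior (closure U) :=
    mem_interior_iff_mem_nhds.2 (mem_of_superset hU subset_closure)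
  obtain ⟨D, hD, hDU⟩ := exists_locallyFinite_isOpen_subsets_of_countable isOpen_interior ⟨1, h1⟩
  have : Finite ℕ := hK.finite_of_locallyFinite hD (fun n => (hDU n).1) fun n =>
    (hDU n).2.1.mono (subset_inter subset_rfl ((hDU n).2.2.trans interior_subset))
  exact not_finite ℕ

theorem Subgroup.exists_isOpen_locallyFinite_smul {H : Subgroup G}
    (hH : ∀ᶠ g in 𝓝 (1 : G), g ∈ H → g = 1) :
    ∃ W : Set G, IsOpen W ∧ (1 : G) ∈ W ∧ LocallyFinite fun h : H => (h : G) • W := by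
  obtain ⟨V, hV, hVH⟩ := exists_nhds_one_split4 hH
  set W := interior (V ∩ V⁻¹)
  have hW : W ⊆ V ∩ V⁻¹ := interior_subset
  have hW1 : (1 : G) ∈ W := mem_interior_iff_mem_nhds.2 (inter_mem hV (inv_mem_nhds_one G hV))
  refine ⟨W, isOpen_interior, hW1, fun y => ⟨y • W, ?_, ?_⟩⟩
  · exact (isOpen_interior.smul y).mem_nhds
      (by simpa only [smul_eq_mul, mul_one] using smul_mem_smul_set (a := y) hW1)
  · refine Subsingleton.finite fun a ⟨z, hza, hzy⟩ b ⟨w, hwb, hwy⟩ => ?_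
    rw [mem_smul_set_iff_inv_smul_mem, smul_eq_mul] at hza hzy hwb hwy
    have hab : (a : G)⁻¹ * b = ((a : G)⁻¹ * z) * (y⁻¹ * z)⁻¹ * (y⁻¹ * w) * ((b : G)⁻¹ * w)⁻¹ := by
      group
    have := hVH (hW hza).1 (hW hzy).2 (hW hwy).1 (hW hwb).2
    rw [← hab] at this
    exact Subtype.ext (inv_mul_eq_one.1 (this (H.mul_mem (H.inv_mem a.2) b.2)))

end TopologicalGroup

/-- a locally pseudocompact Hausdorff topological group all of whose
countable subgroups are locally pseudocompact is discrete. -/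
theorem discrete_of_countable_subgroups_locallyPseudocompact {G : Type*} [Group G]
    [TopologicalSpace G] [IsTopologicalGroup G] [T2Space G]
    (hG : LocallyPseudocompact G)
    (hcnt : ∀ H : Subgroup G, Set.Countable (H : Set G) → LocallyPseudocompact H) :
    DiscreteTopology G := by
  by_contra hnd
  have := IsTopologicalGroup.perfectSpace_of_not_discreteTopology hnd
  obtain ⟨U, hU, hK⟩ := hG
  have hinf : (interior (closure U)).Infinite :=
    infinite_of_mem_nhds 1 (interior_mem_nhds.2 (mem_of_superset hU subset_closure))
  let x := hinf.natEmbedding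
  let H := Subgroup.closure (range fun n => (x n : G))
  have hHc : (H : Set G).Countable := Subgroup.countable_closure (countable_range _)
  have := hHc.to_subtype
  have := discreteTopology_of_countable_of_locallyPseudocompact (hcnt H hHc)
  obtain ⟨W, hWo, hW1, hW⟩ :=
    Subgroup.exists_isOpen_locallyFinite_smul H.eventually_eq_one_of_discreteTopology
  let y : ℕ → H := fun n => ⟨x n, Subgroup.subset_closure (mem_range_self n)⟩
  have hy : Injective y := fun m n h =>
    x.injective (Subtype.ext (congrArg (fun h : H => (h : G)) h))
  have : Finite ℕ := hK.finite_of_locallyFinite (hW.comp_injective hy) (fun n => hWo.smul _)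
    fun n => ⟨x n, by simpa using smul_mem_smul_set (a := (x n : G)) hW1,
      interior_subset (x n).2⟩
  exact not_finite ℕ
end

section
/- Let P be the set of prime numbers, I an uncountable index set, and N = ∏_{p ∈ P} ∏_{i ∈ I} ℤ_p the product of copies of the p-adic integers, indexed by pairs (p, i). Let E₁ be the subgroup of N consisting of elements x such that x_{p,i} = 0 for all i for all but finitely many primes p, and let E₂ be the subgroup of elements x such that the set of pairs (p, i) with x_{p,i} ≠ 0 is countable. Then every element of E₁ + E₂ has at least one coordinate equal to 0; consequently, if Δ is the subgroup of N generated by the element d with d_{p,i} = 1 for all p and i, then (E₁ + E₂) ∩ Δ = {0}. -/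
instance (p : Nat.Primes) : Fact (Nat.Prime (p : ℕ)) := ⟨p.2⟩

section

variable (I : Type*)

/-- `N = ∏_{p prime} ∏_{i ∈ I} ℤ_p`, the product of copies of the `p`-adic integers
indexed by pairs `(p, i)`. -/
abbrev PadicProd : Type _ := (p : Nat.Primes) → I → ℤ_[(p : ℕ)]

/-- `E₁`: the subgroup of elements `x` with `x_{p,i} = 0` for all `i` for all but
finitely many primes `p`. -/
noncomputable def E₁ : AddSubgroup (PadicProd I) where
  carrier := {x | ({p : Nat.Primes | x p ≠ 0}).Finite}
  zero_mem' := by simp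
  add_mem' := by
    intro a b ha hb
    refine (ha.union hb).subset ?_
    intro p hp
    by_contra hc
    simp only [Set.mem_union, Set.mem_setOf_eq, not_or, not_not] at hc
    exact hp (by simp [Set.mem_setOf_eq, hc.1, hc.2])
  neg_mem' := by
    intro a ha
    refine ha.subset ?_
    intro p hp
    simp only [Set.mem_setOf_eq] at hp ⊢
    intro h
    exact hp (by simp [h])

/-- `E₂`: the subgroup of elements `x` whose set of nonzero coordinates `(p, i)` is
countable. -/
noncomputable def E₂ : AddSubgroup (PadicProd I) where
  carrier := {x | Set.Countable {q : Nat.Primes × I | x q.1 q.2 ≠ 0}}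
  zero_mem' := by simp
  add_mem' := by
    intro a b ha hb
    refine (ha.union hb).mono ?_
    intro q hq
    by_contra hc
    simp only [Set.mem_union, Set.mem_setOf_eq, not_or, not_not] at hc
    exact hq (by simp [Set.mem_setOf_eq, hc.1, hc.2])
  neg_mem' := by
    intro a ha
    refine ha.mono ?_
    intro q hq
    simp only [Set.mem_setOf_eq] at hq ⊢
    intro h
    exact hq (by simp [h])

/-- The "diagonal" element `d` with `d_{p,i} = 1` for all `p` and `i`. -/
noncomputable def diagOne : PadicProd I := fun _ _ => 1

end

/-- every element of `E₁ + E₂` has at least one coordinate equal to `0`;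
consequently `(E₁ + E₂) ∩ Δ = {0}`, where `Δ` is the subgroup generated by the
diagonal element `d` with all coordinates `1`. -/
theorem padicProd_sum_has_zero_coordinate {I : Type*} [Uncountable I] :
    (∀ x : PadicProd I, x ∈ E₁ I ⊔ E₂ I → ∃ (p : Nat.Primes) (i : I), x p i = 0) ∧
      (E₁ I ⊔ E₂ I) ⊓ AddSubgroup.zmultiples (diagOne I) = ⊥ := by

  have key : ∀ x : PadicProd I, x ∈ E₁ I ⊔ E₂ I → ∃ (p : Nat.Primes) (i : I), x p i = 0 := by
    intro x hx
    rw [AddSubgroup.mem_sup] at hx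
    obtain ⟨a, ha, b, hb, rfl⟩ := hx
    have ha' : ({p : Nat.Primes | a p ≠ 0}).Finite := ha
    have hb' : Set.Countable {q : Nat.Primes × I | b q.1 q.2 ≠ 0} := hb
    obtain ⟨p, hp⟩ := ha'.infinite_compl.nonempty
    simp only [Set.mem_compl_iff, Set.mem_setOf_eq, not_not] at hp
    have hcb : Set.Countable {i : I | b p i ≠ 0} := by
      have : {i : I | b p i ≠ 0} = (fun i => ((p, i) : Nat.Primes × I)) ⁻¹' {q | b q.1 q.2 ≠ 0} := rfl
      rw [this]
      exact hb'.preimage (fun i j h => (Prod.mk.injEq _ _ _ _ ▸ h).2)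
    have : ∃ i, b p i = 0 := by
      by_contra hcon
      push_neg at hcon
      have : {i : I | b p i ≠ 0} = Set.univ := Set.eq_univ_of_forall (fun i => hcon i)
      rw [this] at hcb
      exact (Set.not_countable_univ) hcb
    obtain ⟨i, hi⟩ := this
    exact ⟨p, i, by simp [congrFun hp i, hi]⟩
  refine ⟨key, ?_⟩
  rw [eq_bot_iff]
  intro x hx
  rw [AddSubgroup.mem_inf] at hx
  obtain ⟨hx1, hx2⟩ := hx
  rw [AddSubgroup.mem_zmultiples_iff] at hx2
  obtain ⟨k, rfl⟩ := hx2
  obtain ⟨p, i, hpi⟩ := key _ hx1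
  have : ((k : ℤ_[(p : ℕ)]) : ℤ_[(p : ℕ)]) = 0 := by
    simpa [diagOne, zsmul_eq_mul] using hpi
  have hk : k = 0 := by exact_mod_cast this
  simp [hk]
end

section
/- Let K₁ and K₂ be compact Hausdorff topological groups, and let h : K₁ → K₂ be a surjective group homomorphism (not assumed continuous) whose kernel is Gδ-dense in K₁. Then the graph Γ_h = {(x, h(x)) : x ∈ K₁} is a Gδ-dense subgroup of the product K₁ × K₂, and in particular Γ_h (with the subspace topology) is pseudocompact. -/
/-- A subset of a topological space is *Gδ-dense* if it meets every nonempty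
Gδ-subset. -/
def GdeltaDense {X : Type*} [TopologicalSpace X] (S : Set X) : Prop :=
  ∀ t : Set X, IsGδ t → t.Nonempty → (t ∩ S).Nonempty

/-- The graph of a group homomorphism, as a subgroup of the product. -/
def MonoidHom.graphSubgroup {K₁ K₂ : Type*} [Group K₁] [Group K₂] (h : K₁ →* K₂) :
    Subgroup (K₁ × K₂) where
  carrier := {p | p.2 = h p.1}
  one_mem' := by simp
  mul_mem' := by
    intro a b ha hb
    simp only [Set.mem_setOf_eq] at ha hb ⊢
    simp [Prod.snd_mul, Prod.fst_mul, ha, hb]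
  inv_mem' := by
    intro a ha
    simp only [Set.mem_setOf_eq] at ha ⊢
    simp [ha]

/-!
The graph of `h` is Gδ-dense because of the kernel: a nonempty Gδ set `t` containing `(a, h c)`
gives the nonempty Gδ set `{x | (x * c, h c) ∈ t}`, which meets `ker h` in some `n`, and
`(n * c, h c)` lies on the graph.

A Gδ-dense subset `S` of a compact group `G` is pseudocompact (Comfort–Ross). Shrinking countably
many neighbourhoods `V k` of `1` to `P k` with `P (k+1) * P (k+1) ⊆ P k ∩ V k` yields a submonoid
`N = ⋂ k, P k`; by compactness the closure of any `N`-stable set `E` equals `⋂ k, E * P k`, so it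
is a Gδ. If `f : S → ℝ` were unbounded, with `|f| > m` on `U m ∩ S`, the closures of the
`N`-stable sets `⋃ m ≥ n, x m * N ⊆ ⋃ m ≥ n, U m` would cut out a nonempty Gδ set of accumulation
points of the `U m`; a point of `S` in it contradicts the continuity of `f` there.
-/

open Set Filter Topology Pointwise

lemma GdeltaDense.inter_nonempty_of_isOpen {X : Type*} [TopologicalSpace X] {S : Set X}
    (hS : GdeltaDense S) {U : Set X} (hU : IsOpen U) (hne : U.Nonempty) : (U ∩ S).Nonempty :=
  hS U hU.isGδ hne

lemma Continuous.exists_isOpen_abs_sub_lt {X : Type*} [TopologicalSpace X] {S : Set X}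
    {f : S → ℝ} (hf : Continuous f) (p : S) {ε : ℝ} (hε : 0 < ε) :
    ∃ U : Set X, IsOpen U ∧ (p : X) ∈ U ∧ ∀ y : S, (y : X) ∈ U → |f y - f p| < ε := by
  obtain ⟨U, hUo, hU⟩ := isOpen_induced_iff.1
    (isOpen_lt (hf.sub continuous_const).abs continuous_const : IsOpen {y : S | |f y - f p| < ε})
  refine ⟨U, hUo, ?_, fun y hy => ?_⟩
  · simpa [← hU] using (show p ∈ Subtype.val ⁻¹' U by simp [hU, hε])
  · exact (hU ▸ hy : y ∈ {y : S | |f y - f p| < ε})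

section TopologicalGroup

variable {G : Type*} [Group G] [TopologicalSpace G] [IsTopologicalGroup G]

lemma closure_subset_mul_of_mem_nhds_one (E : Set G) {U : Set G} (hU : U ∈ 𝓝 1) :
    closure E ⊆ E * U :=
  (closure_subset_mul_right_of_mem_nhds_one_of_inv E (inter_mem hU (inv_mem_nhds_one G hU))
    fun _ hx => ⟨hx.2, by simpa using hx.1⟩).trans (mul_subset_mul_left inter_subset_left)

lemma exists_seq_isOpen_one_mem_mul_subset_inter (V : ℕ → Set G) (hV : ∀ k, V k ∈ 𝓝 1) :
    ∃ P : ℕ → Set G, (∀ k, IsOpen (P k) ∧ (1 : G) ∈ P k) ∧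
      ∀ k, P (k + 1) * P (k + 1) ⊆ P k ∩ V k := by
  have step : ∀ (k : ℕ) (U : {U : Set G // IsOpen U ∧ (1 : G) ∈ U}),
      ∃ W : {U : Set G // IsOpen U ∧ (1 : G) ∈ U}, W.1 * W.1 ⊆ U.1 ∩ V k := fun k U => by
    obtain ⟨W, hWo, hW1, hW⟩ :=
      exists_open_nhds_one_mul_subset (inter_mem (U.2.1.mem_nhds U.2.2) (hV k))
    exact ⟨⟨W, hWo, hW1⟩, hW⟩
  choose next hnext using step
  let P : ℕ → {U : Set G // IsOpen U ∧ (1 : G) ∈ U} :=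
    fun k => Nat.rec ⟨univ, isOpen_univ, mem_univ 1⟩ next k
  exact ⟨fun k => (P k).1, fun k => (P k).2, fun k => hnext k (P k)⟩

lemma closure_eq_iInter_mul_of_mul_iInter_subset [CompactSpace G] {P : ℕ → Set G}
    (hP : ∀ k, IsOpen (P k) ∧ (1 : G) ∈ P k) (hPP : ∀ k, P (k + 1) * P (k + 1) ⊆ P k)
    {E : Set G} (hE : E * ⋂ k, P k ⊆ E) :
    closure E = ⋂ k, E * P k := by
  have hclosureP : ∀ k, closure (P (k + 1)) ⊆ P k := fun k =>
    (closure_subset_mul_of_mem_nhds_one _ ((hP (k + 1)).1.mem_nhds (hP (k + 1)).2)).trans (hPP k)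
  have hPanti : ∀ k, P (k + 1) ⊆ P k := fun k y hy =>
    hPP k ⟨y, hy, 1, (hP (k + 1)).2, mul_one y⟩
  refine (subset_iInter fun k => closure_subset_mul_of_mem_nhds_one E
    ((hP k).1.mem_nhds (hP k).2)).antisymm fun z hz => ?_
  let Z : ℕ → Set G := fun k => closure E ∩ (fun e => e⁻¹ * z) ⁻¹' closure (P k)
  have hZclosed : ∀ k, IsClosed (Z k) := fun k =>
    isClosed_closure.inter (isClosed_closure.preimage (by fun_prop))
  obtain ⟨e, he⟩ : (⋂ k, Z k).Nonempty := by
    refine IsCompact.nonempty_iInter_of_sequence_nonempty_isCompact_isClosed Z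
      (fun k => inter_subset_inter_right _ (preimage_mono (closure_mono (hPanti k))))
      (fun k => ?_) (hZclosed 0).isCompact hZclosed
    obtain ⟨e, he, p, hp, rfl⟩ := mem_iInter.1 hz k
    exact ⟨e, subset_closure he, subset_closure (by simpa using hp)⟩
  have heE : e ∈ closure E := (mem_iInter.1 he 0).1
  have hcofactor : e⁻¹ * z ∈ ⋂ k, P k :=
    mem_iInter.2 fun k => hclosureP k (mem_iInter.1 he (k + 1)).2
  have := map_mem_closure (continuous_mul_const (e⁻¹ * z)) heE
    fun a ha => hE (mul_mem_mul ha hcofactor)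
  simpa using this

lemma exists_submonoid_subset_isGδ_closure [CompactSpace G] (V : ℕ → Set G)
    (hV : ∀ k, V k ∈ 𝓝 1) :
    ∃ N : Submonoid G, (∀ k, (N : Set G) ⊆ V k) ∧
      ∀ E : Set G, E * N ⊆ E → IsGδ (closure E) := by
  obtain ⟨P, hP, hPP⟩ := exists_seq_isOpen_one_mem_mul_subset_inter V hV
  let N : Submonoid G :=
    { carrier := ⋂ k, P k
      one_mem' := mem_iInter.2 fun k => (hP k).2
      mul_mem' := fun ha hb => mem_iInter.2 fun k =>
        (hPP k (mul_mem_mul (mem_iInter.1 ha (k + 1)) (mem_iInter.1 hb (k + 1)))).1 }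
  refine ⟨N, fun k => (iInter_subset _ (k + 1)).trans fun y hy =>
    (hPP k ⟨y, hy, 1, (hP (k + 1)).2, mul_one y⟩).2, fun E hE => ?_⟩
  rw [closure_eq_iInter_mul_of_mul_iInter_subset hP (fun k => (hPP k).trans inter_subset_left) hE]
  exact .iInter fun k => ((hP k).1.mul_left).isGδ

lemma exists_isGδ_nonempty_subset_closure_iUnion_ge [CompactSpace G] {x : ℕ → G}
    {U : ℕ → Set G} (hU : ∀ m, U m ∈ 𝓝 (x m)) :
    ∃ T : Set G, IsGδ T ∧ T.Nonempty ∧ ∀ n, T ⊆ closure (⋃ m ≥ n, U m) := by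
  obtain ⟨N, hNU, hclosure⟩ := exists_submonoid_subset_isGδ_closure (fun m => (x m)⁻¹ • U m)
    fun m => by simpa using (smul_mem_nhds_smul_iff (x m)⁻¹).2 (hU m)
  let E : ℕ → Set G := fun n => ⋃ m ≥ n, {x m} * N
  have hEU : ∀ n, E n ⊆ ⋃ m ≥ n, U m := fun n => iUnion₂_mono fun m _ => by
    rintro _ ⟨_, rfl, ν, hν, rfl⟩
    simpa [mem_smul_set_iff_inv_smul_mem] using hNU m hν
  have hEN : ∀ n, E n * N ⊆ E n := fun n => by
    simp only [E, iUnion₂_mul, mul_assoc, Submonoid.coe_mul_self_eq, subset_refl]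
  refine ⟨⋂ n, closure (E n), .iInter fun n => hclosure _ (hEN n), ?_,
    fun n => (iInter_subset _ n).trans (closure_mono (hEU n))⟩
  refine IsCompact.nonempty_iInter_of_sequence_nonempty_isCompact_isClosed _
    (fun n => closure_mono <| iUnion₂_subset fun m hm =>
      subset_iUnion₂ (s := fun m (_ : m ≥ n) => {x m} * (N : Set G)) m (Nat.le_of_succ_le hm))
    (fun n => ⟨x n, subset_closure <|
      mem_iUnion₂.2 ⟨n, le_rfl, x n, rfl, 1, N.one_mem, mul_one _⟩⟩)
    isClosed_closure.isCompact fun n => isClosed_closure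

theorem GdeltaDense.pseudocompact [CompactSpace G] {S : Set G} (hS : GdeltaDense S) :
    Pseudocompact S := by
  intro f hf
  by_contra! hunbdd
  choose x hx using fun m : ℕ => hunbdd ((m : ℝ) + 1)
  choose U hUo hxU hU using fun m => hf.exists_isOpen_abs_sub_lt (x m) one_pos
  have hUlarge : ∀ m (y : S), (y : G) ∈ U m → (m : ℝ) < |f y| := fun m y hy => by
    have := abs_sub_abs_le_abs_sub (f (x m)) (f y)
    linarith [hx m, abs_sub_comm (f y) (f (x m)) ▸ hU m y hy]
  obtain ⟨T, hTGδ, hTne, hTU⟩ :=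
    exists_isGδ_nonempty_subset_closure_iUnion_ge fun m => (hUo m).mem_nhds (hxU m)
  obtain ⟨q, hqT, hqS⟩ := hS T hTGδ hTne
  obtain ⟨O, hOo, hqO, hO⟩ := hf.exists_isOpen_abs_sub_lt ⟨q, hqS⟩ one_pos
  obtain ⟨n, hn⟩ := exists_nat_gt (|f ⟨q, hqS⟩| + 1)
  obtain ⟨z, hzO, hzU⟩ := mem_closure_iff.1 (hTU n hqT) O hOo hqO
  obtain ⟨m, hnm, hzU⟩ := mem_iUnion₂.1 hzU
  obtain ⟨s, ⟨hsO, hsU⟩, hsS⟩ := hS.inter_nonempty_of_isOpen (hOo.inter (hUo m)) ⟨z, hzO, hzU⟩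
  have := abs_sub_abs_le_abs_sub (f ⟨s, hsS⟩) (f ⟨q, hqS⟩)
  linarith [hUlarge m ⟨s, hsS⟩ hsU, hO ⟨s, hsS⟩ hsO, (Nat.cast_le (α := ℝ)).2 hnm]

end TopologicalGroup

theorem MonoidHom.gdeltaDense_graphSubgroup {K₁ K₂ : Type*} [Group K₁] [TopologicalSpace K₁]
    [ContinuousMul K₁] [Group K₂] [TopologicalSpace K₂] (h : K₁ →* K₂)
    (hsurj : Function.Surjective h) (hker : GdeltaDense (h.ker : Set K₁)) :
    GdeltaDense (h.graphSubgroup : Set (K₁ × K₂)) := by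
  rintro t ht ⟨⟨a, b⟩, hab⟩
  obtain ⟨c, rfl⟩ := hsurj b
  let φ : K₁ → K₁ × K₂ := fun x => (x * c, h c)
  obtain ⟨n, hnt, hn⟩ :=
    hker (φ ⁻¹' t) (ht.preimage (by fun_prop)) ⟨a * c⁻¹, by simpa [φ] using hab⟩
  refine ⟨φ n, hnt, ?_⟩
  show h c = h (n * c)
  rw [map_mul, MonoidHom.mem_ker.1 hn, one_mul]

theorem graph_GdeltaDense_and_pseudocompact_general {K₁ K₂ : Type*}
    [Group K₁] [TopologicalSpace K₁] [IsTopologicalGroup K₁] [CompactSpace K₁]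
    [Group K₂] [TopologicalSpace K₂] [IsTopologicalGroup K₂] [CompactSpace K₂]
    (h : K₁ →* K₂) (hsurj : Function.Surjective h)
    (hker : GdeltaDense (h.ker : Set K₁)) :
    GdeltaDense (h.graphSubgroup : Set (K₁ × K₂)) ∧
      Pseudocompact h.graphSubgroup := by
  have hgraph := h.gdeltaDense_graphSubgroup hsurj hker
  exact ⟨hgraph, hgraph.pseudocompact⟩

/-- if `K₁`, `K₂` are compact Hausdorff topological groups and
`h : K₁ → K₂` is a surjective (not necessarily continuous) homomorphism whose kernel is
Gδ-dense in `K₁`, then the graph of `h` is a Gδ-dense subgroup of `K₁ × K₂`; in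
particular the graph is pseudocompact in the subspace topology. -/
theorem graph_GdeltaDense_and_pseudocompact {K₁ K₂ : Type*}
    [Group K₁] [TopologicalSpace K₁] [IsTopologicalGroup K₁] [CompactSpace K₁] [T2Space K₁]
    [Group K₂] [TopologicalSpace K₂] [IsTopologicalGroup K₂] [CompactSpace K₂] [T2Space K₂]
    (h : K₁ →* K₂) (hsurj : Function.Surjective h)
    (hker : GdeltaDense (h.ker : Set K₁)) :
    GdeltaDense (h.graphSubgroup : Set (K₁ × K₂)) ∧
      Pseudocompact h.graphSubgroup :=
  graph_GdeltaDense_and_pseudocompact_general h hsurj hker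
end
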